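/- Let G = ℤ/2 × ℤ/2 over a field K of characteristic 2, so K[G] ≅ K[X,Y]/(X²,Y²). The fusion-graph recursion for tensoring with the 3-dimensional indecomposable V gives coefficient sums b_n satisfying: b_n / 3^n → 1/4 as n → ∞. Concretely, for the sequence defined by the action matrix of the graph in which the projective vertex P has a loop of multiplicity 3 and each vertex M_{2k+1} (k ≥ 1) has one edge to M_{2k+3} and k edges to P, starting from the vertex 𝟙, the total count b_n of the n-th step weighted walk satisfies lim b_n/3^n = 1/4. -/
import Mathlib


open Filter

/-- Vertices of the fusion graph of the Klein four group in characteristic 2: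
`Sum.inl 0` is the unit `𝟙 = M₁`, `Sum.inl k` is the odd-dimensional
indecomposable `M_{2k+1}` for `k ≥ 1`, and `Sum.inr ()` is the projective `P`. -/
abbrev KleinVertex := ℕ ⊕ Unit

/-- Row of the action matrix `M(Kl)`: `𝟙 → M₃`; `M_{2k+1} → M_{2k+3}` and
`M_{2k+1} → P` with multiplicity `k` (for `k ≥ 1`); `P → P` with multiplicity 3. -/
noncomputable def kleinRow : KleinVertex → (KleinVertex →₀ ℕ)
  | Sum.inl 0 => Finsupp.single (Sum.inl 1) 1
  | Sum.inl (k + 1) =>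
      Finsupp.single (Sum.inl (k + 2)) 1 + Finsupp.single (Sum.inr ()) (k + 1)
  | Sum.inr _ => Finsupp.single (Sum.inr ()) 3

/-- The walk vector: `v 0 = e_𝟙` and `v (n+1) = M · v n`. -/
noncomputable def kleinVec : ℕ → (KleinVertex →₀ ℕ)
  | 0 => Finsupp.single (Sum.inl 0) 1
  | n + 1 => (kleinVec n).sum fun y c => c • kleinRow y

/-- auxiliary: the P-coefficient -/
def kleinP : ℕ → ℕ
  | 0 => 0
  | n + 1 => 3 * kleinP n + n

lemma kleinVec_eq (n : ℕ) :
    kleinVec n = Finsupp.single (Sum.inl n) 1 + Finsupp.single (Sum.inr ()) (kleinP n) := by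
  induction n with
  | zero => simp [kleinVec, kleinP]
  | succ n ih =>
    rw [kleinVec, ih, Finsupp.sum_add_index (by simp) (by simp [add_smul])]
    rw [Finsupp.sum_single_index (by simp), Finsupp.sum_single_index (by simp)]
    cases n with
    | zero => simp [kleinRow, kleinP]
    | succ m =>
      simp only [kleinRow, kleinP, one_smul, Finsupp.smul_single, smul_eq_mul]
      rw [add_assoc, ← Finsupp.single_add]
      congr 2
      ring

lemma kleinP_id (n : ℕ) : 4 * kleinP n + 2 * n + 1 = 3 ^ n := by
  induction n with
  | zero => simp [kleinP]
  | succ n ih => simp only [kleinP]; ring_nf; ring_nf at ih; omega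

/-- For the Klein four group over a field of characteristic 2 and its
3-dimensional indecomposable `V`, the total number `b_n` of indecomposable
summands of `V^{⊗n}` (the weighted walk count on the fusion graph) satisfies
`b_n/3^n → 1/4`. -/
theorem stmt_17 :
    Tendsto (fun n : ℕ => (((kleinVec n).sum fun _ c => c : ℕ) : ℝ) / 3 ^ n)
      atTop (nhds (1 / 4)) := by
  have hsum : ∀ n, ((kleinVec n).sum fun _ c => c) = 1 + kleinP n := by
    intro n
    rw [kleinVec_eq, Finsupp.sum_add_index (by simp) (by simp)]
    rw [Finsupp.sum_single_index rfl, Finsupp.sum_single_index rfl]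
  have hfun : ∀ n : ℕ, (((kleinVec n).sum fun _ c => c : ℕ) : ℝ) / 3 ^ n
      = 1 / 4 + (3 / 4) * (1 / 3 : ℝ) ^ n - (1 / 2) * (n * (1 / 3 : ℝ) ^ n) := by
    intro n
    have h := kleinP_id n
    have h' : (4 : ℝ) * kleinP n + 2 * n + 1 = 3 ^ n := by exact_mod_cast congrArg (fun x : ℕ => (x : ℝ)) h
    have h3 : (3 : ℝ) ^ n ≠ 0 := by positivity
    rw [hsum]
    have key : (1 / 3 : ℝ) ^ n * 3 ^ n = 1 := by
      rw [← mul_pow]; norm_num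
    push_cast
    rw [div_eq_iff h3]
    linear_combination (1/4 : ℝ) * h' - (3/4 - (n : ℝ)/2) * key
  simp only [hfun]
  have h1 : Tendsto (fun n : ℕ => (3 / 4) * (1 / 3 : ℝ) ^ n) atTop (nhds 0) := by
    simpa using (tendsto_pow_atTop_nhds_zero_of_lt_one (by norm_num) (by norm_num : (1/3:ℝ) < 1)).const_mul (3/4 : ℝ)
  have h2 : Tendsto (fun n : ℕ => (1 / 2) * ((n : ℝ) * (1 / 3 : ℝ) ^ n)) atTop (nhds 0) := by
    simpa using (tendsto_self_mul_const_pow_of_lt_one (by norm_num) (by norm_num : (1/3:ℝ) < 1)).const_mul (1/2 : ℝ)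
  have h := (h1.const_add (1/4 : ℝ)).sub h2
  simpa using h
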